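/- arXiv:1604.02540 — 6 statements merged into one kernel-verified Lean document; each statement's English description precedes it below -/
import Mathlib

section
/- Let R : V →ₗ[K] V be a K-linear map such that R v = v for every v ∈ A (1,0), and such that ρ(R v) < ρ(v) in the lexicographic order for every v ∉ A (1,0). Then for every v ∈ V the sequence of iterates v, R v, R² v, … stabilizes: there exists n ∈ ℕ such that Rⁿ v ∈ A (1,0) and R^m v = Rⁿ v for all m ≥ n. Consequently the pointwise limit R^∞ : V → V is a well-defined K-linear map whose image is contained in A (1,0) and which restricts to the identity on A (1,0). -/
/-- Iterates of the basic retraction `R` stabilize, and the pointwise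
limit `R^∞` is a well-defined linear map with image in the bottom filtration piece
`A (1,0)`, restricting to the identity there. -/
theorem stmt_0 {K V : Type*} [CommRing K] [AddCommGroup V] [Module K V]
    (A : ℕ ×ₗ ℕ → Submodule K V) (hmono : Monotone A)
    (hexh : ∀ v : V, ∃ p, v ∈ A p)
    (ρ : V → ℕ ×ₗ ℕ)
    (hρ_mem : ∀ v, v ∈ A (ρ v))
    (hρ_min : ∀ v p, v ∈ A p → ρ v ≤ p)
    (R : V →ₗ[K] V)
    (hR_id : ∀ v ∈ A (toLex (1, 0)), R v = v)
    (hR_dec : ∀ v, v ∉ A (toLex (1, 0)) → ρ (R v) < ρ v) :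
    (∀ v : V, ∃ n : ℕ, (R ^ n) v ∈ A (toLex (1, 0)) ∧
      ∀ m : ℕ, n ≤ m → (R ^ m) v = (R ^ n) v) ∧
    ∃ Rinf : V →ₗ[K] V,
      (∀ v : V, ∃ n : ℕ, ∀ m : ℕ, n ≤ m → (R ^ m) v = Rinf v) ∧
      (∀ v : V, Rinf v ∈ A (toLex (1, 0))) ∧
      (∀ v ∈ A (toLex (1, 0)), Rinf v = v) := by
  classical
  -- every orbit eventually enters A (1,0)
  have key : ∀ v : V, ∃ n : ℕ, (R ^ n) v ∈ A (toLex (1, 0)) := by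
    have wf : WellFounded ((· < ·) : ℕ ×ₗ ℕ → ℕ ×ₗ ℕ → Prop) := wellFounded_lt
    intro v
    refine wf.induction
      (C := fun p => ∀ w : V, ρ w = p → ∃ n, (R ^ n) w ∈ A (toLex (1, 0))) (ρ v) ?_ v rfl
    intro p IH w hw
    by_cases h : w ∈ A (toLex (1, 0))
    · exact ⟨0, by simpa using h⟩
    · obtain ⟨n, hn⟩ := IH (ρ (R w)) (hw ▸ hR_dec w h) (R w) rfl
      refine ⟨n + 1, ?_⟩
      rw [pow_succ, Module.End.mul_apply]
      exact hn
  -- once in A (1,0), the orbit is constant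
  have const : ∀ (v : V) (n : ℕ), (R ^ n) v ∈ A (toLex (1, 0)) →
      ∀ m : ℕ, n ≤ m → (R ^ m) v = (R ^ n) v := by
    intro v n hn m hm
    obtain ⟨k, rfl⟩ := Nat.exists_eq_add_of_le hm
    clear hm
    induction k with
    | zero => rfl
    | succ k ih =>
      have : n + (k + 1) = (n + k) + 1 := rfl
      rw [this, pow_succ', Module.End.mul_apply, ih, hR_id _ hn]
  have stab : ∀ v : V, ∃ n : ℕ, (R ^ n) v ∈ A (toLex (1, 0)) ∧
      ∀ m : ℕ, n ≤ m → (R ^ m) v = (R ^ n) v := by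
    intro v
    obtain ⟨n, hn⟩ := key v
    exact ⟨n, hn, const v n hn⟩
  refine ⟨stab, ?_⟩
  -- the limit map
  set N : V → ℕ := fun v => (stab v).choose with hN
  have hNmem : ∀ v, (R ^ N v) v ∈ A (toLex (1, 0)) := fun v => (stab v).choose_spec.1
  have hNst : ∀ v, ∀ m, N v ≤ m → (R ^ m) v = (R ^ N v) v :=
    fun v => (stab v).choose_spec.2
  set f : V → V := fun v => (R ^ N v) v with hf
  have hfst : ∀ v, ∀ m, N v ≤ m → (R ^ m) v = f v := fun v m hm => hNst v m hm
  have hadd : ∀ v w : V, f (v + w) = f v + f w := by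
    intro v w
    set n := max (N (v + w)) (max (N v) (N w)) with hn
    have h1 : (R ^ n) (v + w) = f (v + w) := hfst _ n (le_max_left _ _)
    have h2 : (R ^ n) v = f v := hfst _ n (le_trans (le_max_left _ _) (le_max_right _ _))
    have h3 : (R ^ n) w = f w := hfst _ n (le_trans (le_max_right _ _) (le_max_right _ _))
    rw [← h1, ← h2, ← h3, map_add]
  have hsmul : ∀ (c : K) (v : V), f (c • v) = c • f v := by
    intro c v
    set n := max (N (c • v)) (N v) with hn
    have h1 : (R ^ n) (c • v) = f (c • v) := hfst _ n (le_max_left _ _)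
    have h2 : (R ^ n) v = f v := hfst _ n (le_max_right _ _)
    rw [← h1, ← h2, map_smul]
  refine ⟨⟨⟨f, hadd⟩, hsmul⟩, ?_, ?_, ?_⟩
  · exact fun v => ⟨N v, fun m hm => hfst v m hm⟩
  · exact fun v => hNmem v
  · intro v hv
    have : ∀ m : ℕ, (R ^ m) v = v := by
      intro m
      induction m with
      | zero => rfl
      | succ m ih => rw [pow_succ', Module.End.mul_apply, ih, hR_id _ hv]
    exact this (N v)
end

section
/- Assume R : V →ₗ[K] V satisfies R v = v for every v ∈ A (1,0) and ρ(R v) < ρ(v) in the lexicographic order for every v ∉ A (1,0). Then for every finitely generated submodule C ⊆ V there exists n ∈ ℕ such that R^m v = Rⁿ v for every v ∈ C and every m ≥ n; that is, the iterates of R stabilize after finitely many steps uniformly on C, so the infinite iterate R^∞ agrees with the finite iterate Rⁿ on C. -/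
/-- On any finitely generated submodule `C`, the iterates of the basic
retraction `R` stabilize after a uniform finite number of steps. -/
theorem stmt_1 {K V : Type*} [CommRing K] [AddCommGroup V] [Module K V]
    (A : ℕ ×ₗ ℕ → Submodule K V) (hmono : Monotone A)
    (hexh : ∀ v : V, ∃ p, v ∈ A p)
    (ρ : V → ℕ ×ₗ ℕ)
    (hρ_mem : ∀ v, v ∈ A (ρ v))
    (hρ_min : ∀ v p, v ∈ A p → ρ v ≤ p)
    (R : V →ₗ[K] V)
    (hR_id : ∀ v ∈ A (toLex (1, 0)), R v = v)
    (hR_dec : ∀ v, v ∉ A (toLex (1, 0)) → ρ (R v) < ρ v) :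
    ∀ C : Submodule K V, C.FG →
      ∃ n : ℕ, ∀ v ∈ C, ∀ m : ℕ, n ≤ m → (R ^ m) v = (R ^ n) v := by
  -- Pointwise stabilization by well-founded induction on ρ v
  have key : ∀ p : ℕ ×ₗ ℕ, ∀ v : V, ρ v = p →
      ∃ n : ℕ, ∀ m : ℕ, n ≤ m → (R ^ m) v = (R ^ n) v := by
    intro p
    induction p using WellFoundedLT.induction with
    | _ p ih =>
      intro v hv
      by_cases hmem : v ∈ A (toLex (1, 0))
      · refine ⟨0, fun m _ => ?_⟩
        induction m with
        | zero => rfl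
        | succ k hk =>
          rw [pow_succ, Module.End.mul_apply, hR_id v hmem]
          exact hk (Nat.zero_le _)
      · obtain ⟨n, hn⟩ := ih (ρ (R v)) (hv ▸ hR_dec v hmem) (R v) rfl
        refine ⟨n + 1, fun m hm => ?_⟩
        obtain ⟨k, rfl⟩ := Nat.exists_eq_add_of_le hm
        have : ∀ j : ℕ, (R ^ (j + 1)) v = (R ^ j) (R v) := by
          intro j; rw [pow_succ, Module.End.mul_apply]
        rw [show n + 1 + k = (n + k) + 1 by ring, this, this, hn (n + k) (Nat.le_add_right _ _)]
  intro C hC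
  obtain ⟨s, hs⟩ := hC
  -- choose stabilization index for each generator
  choose f hf using fun v : V => key (ρ v) v rfl
  obtain ⟨N, hN⟩ : ∃ N, ∀ x ∈ s, f x ≤ N := by
    refine ⟨s.sup f, fun x hx => Finset.le_sup hx⟩
  refine ⟨N, fun v hv m hm => ?_⟩
  have hstable : ∀ x ∈ (s : Set V), (R ^ m) x = (R ^ N) x := by
    intro x hx
    rw [hf x m (le_trans (hN x hx) hm), hf x N (hN x hx)]
  -- the set where R^m and R^N agree is a submodule
  have : v ∈ Submodule.span K (s : Set V) := hs ▸ hv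
  have heq : Submodule.span K (s : Set V) ≤
      LinearMap.ker ((R ^ m : V →ₗ[K] V) - (R ^ N : V →ₗ[K] V)) := by
    rw [Submodule.span_le]
    intro x hx
    simp [LinearMap.mem_ker, sub_eq_zero, hstable x hx]
  have := heq this
  simpa [LinearMap.mem_ker, sub_eq_zero] using this
end

section
/- With D and d as in the context: (1) d ∘ d = 0, so (D, d) is a cochain complex; (2) the diagonal map ι : C → D defined by ι(γ) = ((γ, 0))_{n ∈ ℕ} is a chain map; (3) ι is a quasi-isomorphism, i.e. it induces an isomorphism on cohomology in every degree; and (4) if C' ⊆ C is a subcomplex and D' ⊆ D is the subcomplex consisting of sequences ((γₙ, ηₙ))ₙ with γₙ ∈ C' and ηₙ ∈ C' for all sufficiently large n, then ι restricts to a quasi-isomorphism from C' to D'. -/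
/-- The degree-`(j+1)` piece of the homotopy-limit complex:
`D^{j+1} = ∏_{n ∈ ℕ} (C^{j+1} × C^j)`. -/
abbrev homLimPiece (M : ℤ → Type*) (j : ℤ) := ℕ → M (j + 1) × M j

/-- The differential `d : D^{j+1} → D^{j+2}`,
`d((γₙ, ηₙ))ₙ = ((∂γₙ, γₙ + γₙ₊₁ + ∂ηₙ))ₙ`. -/
def homLimD (K : Type*) [Field K] {M : ℤ → Type*}
    [∀ k, AddCommGroup (M k)] [∀ k, Module K (M k)]
    (dC : ∀ k, M k →ₗ[K] M (k + 1)) (j : ℤ) :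
    homLimPiece M j →ₗ[K] homLimPiece M (j + 1) where
  toFun f n := (dC (j + 1) (f n).1, (f n).1 + (f (n + 1)).1 + dC j (f n).2)
  map_add' f g := by
    funext n
    refine Prod.ext ?_ ?_
    · simp
    · simp only [Pi.add_apply, Prod.fst_add, Prod.snd_add, map_add, Prod.snd_add]
      abel
  map_smul' c f := by
    funext n
    refine Prod.ext ?_ ?_
    · simp
    · simp [smul_add]

/-- The diagonal map `ι : C^{j+1} → D^{j+1}`, `ι(γ) = ((γ, 0))ₙ`. -/
def homLimIota (K : Type*) [Field K] (M : ℤ → Type*)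
    [∀ k, AddCommGroup (M k)] [∀ k, Module K (M k)] (j : ℤ) :
    M (j + 1) →ₗ[K] homLimPiece M j where
  toFun γ _ := (γ, 0)
  map_add' γ γ' := by
    funext n
    simp [Prod.mk_add_mk]
  map_smul' c γ := by
    funext n
    simp [Prod.smul_mk]

/-- The subcomplex `D'` of sequences whose entries eventually lie in the
subcomplex `C'` (given by submodules `P`). -/
def homLimEvIn {K : Type*} [Field K] {M : ℤ → Type*}
    [∀ k, AddCommGroup (M k)] [∀ k, Module K (M k)]
    (P : ∀ k, Submodule K (M k)) (j : ℤ) (g : homLimPiece M j) : Prop :=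
  ∃ N : ℕ, ∀ n ≥ N, (g n).1 ∈ P (j + 1) ∧ (g n).2 ∈ P j

lemma char2_addself {K : Type*} [Field K] [CharP K 2] {V : Type*}
    [AddCommGroup V] [Module K V] (x : V) : x + x = 0 := by
  have h2 : (2 : K) = 0 := by exact_mod_cast CharP.cast_eq_zero K 2
  calc x + x = (2 : K) • x := (two_smul K x).symm
    _ = 0 := by rw [h2, zero_smul]

lemma homLimD_apply {K : Type*} [Field K] {M : ℤ → Type*}
    [∀ k, AddCommGroup (M k)] [∀ k, Module K (M k)]
    (dC : ∀ k, M k →ₗ[K] M (k + 1)) (j : ℤ) (f : homLimPiece M j) (n : ℕ) :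
    homLimD K dC j f n =
      (dC (j + 1) (f n).1, (f n).1 + (f (n + 1)).1 + dC j (f n).2) := rfl

lemma homLimIota_apply {K : Type*} [Field K] {M : ℤ → Type*}
    [∀ k, AddCommGroup (M k)] [∀ k, Module K (M k)]
    (j : ℤ) (γ : M (j + 1)) (n : ℕ) :
    homLimIota K M j γ n = (γ, 0) := rfl

lemma inj_aux {K : Type*} [Field K] [CharP K 2] {M : ℤ → Type*}
    [∀ k, AddCommGroup (M k)] [∀ k, Module K (M k)]
    (dC : ∀ k, M k →ₗ[K] M (k + 1)) (P : ∀ k, Submodule K (M k)) (j : ℤ)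
    (γ : M (j + 1 + 1))
    (hfe : ∃ f : homLimPiece M j, homLimEvIn P j f ∧
      homLimIota K M (j + 1) γ = homLimD K dC j f) :
    ∃ β ∈ P (j + 1), dC (j + 1) β = γ := by
  obtain ⟨f, ⟨N, hN⟩, heq⟩ := hfe
  have h := congrFun heq N
  rw [homLimIota_apply, homLimD_apply] at h
  exact ⟨(f N).1, (hN N le_rfl).1, (congrArg Prod.fst h).symm⟩

lemma surj_aux {K : Type*} [Field K] [CharP K 2] {M : ℤ → Type*}
    [∀ k, AddCommGroup (M k)] [∀ k, Module K (M k)]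
    (dC : ∀ k, M k →ₗ[K] M (k + 1)) (P : ∀ k, Submodule K (M k)) (j : ℤ)
    (g : homLimPiece M (j + 1)) (hgP : homLimEvIn P (j + 1) g)
    (h0 : homLimD K dC (j + 1) g = 0) :
    ∃ γ ∈ P (j + 1 + 1), dC (j + 1 + 1) γ = 0 ∧
      ∃ f : homLimPiece M j, homLimEvIn P j f ∧
        g = homLimIota K M (j + 1) γ + homLimD K dC j f := by
  obtain ⟨N, hN⟩ := hgP
  have h1 : ∀ n, dC (j + 1 + 1) (g n).1 = 0 := fun n => congrArg Prod.fst (congrFun h0 n)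
  have h2 : ∀ n, (g n).1 + (g (n + 1)).1 + dC (j + 1) (g n).2 = 0 :=
    fun n => congrArg Prod.snd (congrFun h0 n)
  have h2' : ∀ n, (g (n + 1)).1 = (g n).1 + dC (j + 1) (g n).2 := by
    intro n
    calc (g (n + 1)).1
        = (g (n + 1)).1 + ((g n).1 + (g (n + 1)).1 + dC (j + 1) (g n).2) := by
          rw [h2 n, add_zero]
      _ = ((g n).1 + dC (j + 1) (g n).2) + ((g (n + 1)).1 + (g (n + 1)).1) := by abel
      _ = (g n).1 + dC (j + 1) (g n).2 := by rw [char2_addself (K := K), add_zero]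
  set S : ℕ → M (j + 1) := fun n => ∑ k ∈ Finset.range n, (g k).2 with hS
  have hSsucc : ∀ n, S (n + 1) = S n + (g n).2 := fun n => Finset.sum_range_succ _ n
  have hdS : ∀ n, dC (j + 1) (S n) = (g 0).1 + (g n).1 := by
    intro n
    induction n with
    | zero =>
        simp only [hS, Finset.range_zero, Finset.sum_empty, map_zero]
        exact (char2_addself (K := K) _).symm
    | succ n ih =>
        rw [hSsucc, map_add, ih, h2' n]; abel
  set a : ℕ → M (j + 1) := fun n => S n + S N with ha
  have hda : ∀ n, dC (j + 1) (a n) = ((g 0).1 + (g n).1) + ((g 0).1 + (g N).1) := by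
    intro n; rw [ha]; simp only [map_add, hdS]
  refine ⟨(g N).1, (hN N le_rfl).1, h1 N, fun n => (a n, 0), ?_, ?_⟩
  · refine ⟨N, ?_⟩
    intro n hn
    refine ⟨?_, zero_mem _⟩
    induction n, hn using Nat.le_induction with
    | base =>
        show a N ∈ P (j + 1)
        rw [ha]; simp only
        rw [char2_addself (K := K)]; exact zero_mem _
    | succ n hn ih =>
        show a (n + 1) ∈ P (j + 1)
        have : a (n + 1) = a n + (g n).2 := by rw [ha]; simp only [hSsucc]; abel
        rw [this]
        exact add_mem ih (hN n hn).2
  · funext n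
    rw [Pi.add_apply, homLimIota_apply, homLimD_apply]
    refine Prod.ext ?_ ?_
    · show (g n).1 = (g N).1 + dC (j + 1) (a n)
      rw [hda]
      symm
      calc (g N).1 + (((g 0).1 + (g n).1) + ((g 0).1 + (g N).1))
          = (g n).1 + ((g 0).1 + (g 0).1) + ((g N).1 + (g N).1) := by abel
        _ = (g n).1 := by
            rw [char2_addself (K := K), char2_addself (K := K), add_zero, add_zero]
    · show (g n).2 = 0 + (a n + a (n + 1) + dC j 0)
      rw [map_zero, add_zero, zero_add, ha]
      simp only [hSsucc]
      calc (g n).2 = (g n).2 + ((S n + S n) + (S N + S N)) := by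
            rw [char2_addself (K := K), char2_addself (K := K), add_zero, add_zero]
        _ = S n + S N + (S n + (g n).2 + S N) := by abel

/-- For the homotopy-limit complex `D` with `Dᵏ = ∏_{n}(Cᵏ × C^{k-1})`
over a field of characteristic 2: (1) `d ∘ d = 0`; (2) the diagonal `ι` is a chain map;
(3) `ι` is a quasi-isomorphism (injectivity and surjectivity on cohomology, stated
elementwise); (4) for a subcomplex `C' = P` of `C`, `ι` restricts to a quasi-isomorphism
from `C'` to the subcomplex `D'` of eventually-`C'` sequences. -/
theorem stmt_3 {K : Type*} [Field K] [CharP K 2] (M : ℤ → Type*)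
    [∀ k, AddCommGroup (M k)] [∀ k, Module K (M k)]
    (dC : ∀ k, M k →ₗ[K] M (k + 1))
    (hdC : ∀ (k : ℤ) (x : M k), dC (k + 1) (dC k x) = 0) :
    -- (1) d ∘ d = 0
    (∀ (j : ℤ) (f : homLimPiece M j),
      homLimD K dC (j + 1) (homLimD K dC j f) = 0) ∧
    -- (2) ι is a chain map
    (∀ (j : ℤ) (γ : M (j + 1)),
      homLimD K dC j (homLimIota K M j γ) = homLimIota K M (j + 1) (dC (j + 1) γ)) ∧
    -- (3) ι is a quasi-isomorphism: injective on cohomology ...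
    (∀ (j : ℤ) (γ : M (j + 1 + 1)), dC (j + 1 + 1) γ = 0 →
      (∃ f : homLimPiece M j, homLimIota K M (j + 1) γ = homLimD K dC j f) →
      ∃ β : M (j + 1), dC (j + 1) β = γ) ∧
    -- ... and surjective on cohomology
    (∀ (j : ℤ) (g : homLimPiece M (j + 1)), homLimD K dC (j + 1) g = 0 →
      ∃ γ : M (j + 1 + 1), dC (j + 1 + 1) γ = 0 ∧
        ∃ f : homLimPiece M j, g = homLimIota K M (j + 1) γ + homLimD K dC j f) ∧
    -- (4) restriction to subcomplexes
    (∀ P : ∀ k, Submodule K (M k), (∀ (k : ℤ), ∀ x ∈ P k, dC k x ∈ P (k + 1)) →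
      -- ι maps C' into D'
      (∀ (j : ℤ), ∀ γ ∈ P (j + 1), homLimEvIn P j (homLimIota K M j γ)) ∧
      -- D' is a subcomplex
      (∀ (j : ℤ) (g : homLimPiece M j), homLimEvIn P j g →
        homLimEvIn P (j + 1) (homLimD K dC j g)) ∧
      -- the restriction of ι is injective on cohomology ...
      (∀ (j : ℤ) (γ : M (j + 1 + 1)), γ ∈ P (j + 1 + 1) → dC (j + 1 + 1) γ = 0 →
        (∃ f : homLimPiece M j, homLimEvIn P j f ∧
          homLimIota K M (j + 1) γ = homLimD K dC j f) →
        ∃ β ∈ P (j + 1), dC (j + 1) β = γ) ∧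
      -- ... and surjective on cohomology
      (∀ (j : ℤ) (g : homLimPiece M (j + 1)), homLimEvIn P (j + 1) g →
        homLimD K dC (j + 1) g = 0 →
        ∃ γ ∈ P (j + 1 + 1), dC (j + 1 + 1) γ = 0 ∧
          ∃ f : homLimPiece M j, homLimEvIn P j f ∧
            g = homLimIota K M (j + 1) γ + homLimD K dC j f)) := by
  have top : ∀ (j : ℤ) (f : homLimPiece M j), homLimEvIn (fun k => (⊤ : Submodule K (M k))) j f :=
    fun j f => ⟨0, fun n _ => ⟨Submodule.mem_top, Submodule.mem_top⟩⟩
  refine ⟨?_, ?_, ?_, ?_, ?_⟩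
  · -- (1)
    intro j f
    funext n
    rw [homLimD_apply, homLimD_apply]
    refine Prod.ext ?_ ?_
    · show dC (j + 1 + 1) (dC (j + 1) (f n).1) = 0
      exact hdC _ _
    · show dC (j + 1) (f n).1 + dC (j + 1) (f (n + 1)).1 +
        dC (j + 1) ((f n).1 + (f (n + 1)).1 + dC j (f n).2) = 0
      rw [map_add, map_add, hdC, add_zero]
      calc dC (j + 1) (f n).1 + dC (j + 1) (f (n + 1)).1 +
            (dC (j + 1) (f n).1 + dC (j + 1) (f (n + 1)).1)
          = (dC (j + 1) (f n).1 + dC (j + 1) (f n).1) +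
            (dC (j + 1) (f (n + 1)).1 + dC (j + 1) (f (n + 1)).1) := by abel
        _ = 0 := by
            rw [char2_addself (K := K), char2_addself (K := K), add_zero]
  · -- (2)
    intro j γ
    funext n
    rw [homLimD_apply, homLimIota_apply, homLimIota_apply, homLimIota_apply]
    refine Prod.ext rfl ?_
    show γ + γ + dC j 0 = 0
    rw [map_zero, add_zero, char2_addself (K := K)]
  · -- (3) injectivity
    intro j γ _ ⟨f, hf⟩
    obtain ⟨β, _, hβ⟩ := inj_aux dC (fun k => (⊤ : Submodule K (M k))) j γ
      ⟨f, top j f, hf⟩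
    exact ⟨β, hβ⟩
  · -- (3) surjectivity
    intro j g h0
    obtain ⟨γ, _, hγ, f, _, hf⟩ := surj_aux dC (fun k => (⊤ : Submodule K (M k))) j g
      (top _ g) h0
    exact ⟨γ, hγ, f, hf⟩
  · -- (4)
    intro P hP
    refine ⟨?_, ?_, ?_, ?_⟩
    · intro j γ hγ
      exact ⟨0, fun n _ => ⟨hγ, zero_mem _⟩⟩
    · rintro j g ⟨N, hN⟩
      refine ⟨N, fun n hn => ⟨?_, ?_⟩⟩
      · exact hP _ _ (hN n hn).1
      · exact add_mem (add_mem (hN n hn).1 (hN (n + 1) (by omega)).1)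
          (hP _ _ (hN n hn).2)
    · intro j γ _ _ hfe
      exact inj_aux dC P j γ hfe
    · intro j g hg h0
      exact surj_aux dC P j g hg h0
end

section
/- Let a < b be real numbers, let u : ℝ × ℝ → ℂ be continuously differentiable on [a,b] × [0,1], and let V : ℝ × ℝ → ℂ be continuous, such that ∂u/∂s (s,t) = i · (V(s,t) − ∂u/∂t (s,t)) for all (s,t) ∈ [a,b] × [0,1]. Assume Re u(s,0) = Re u(s,1) for all s ∈ [a,b], and assume Im u(s,t) > 1/10 and Re V(s,t) < 0 for all (s,t) ∈ [a,b] × [0,1]. Then ∫₀¹ Im u(a,t) dt > ∫₀¹ Im u(b,t) dt. -/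
/-!
The equation gives `Im ∂ₛu = Re V - ∂ₜ(Re u)`. Integrate this over the rectangle
`[a,b] × [0,1]` and use Fubini together with the fundamental theorem of calculus in each
direction: the left side becomes `∫₀¹ Im u(b,t) dt - ∫₀¹ Im u(a,t) dt`, the `∂ₜ` term
becomes `∫ₐᵇ (Re u(s,1) - Re u(s,0)) ds = 0`, and what remains is the integral of
`Re V < 0`.
-/

open MeasureTheory Set

theorem setIntegral_neg_of_forall_neg {X : Type*} [MeasurableSpace X] {μ : Measure X}
    {s : Set X} {g : X → ℝ} (hs : MeasurableSet s) (hμs : μ s ≠ 0)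
    (hg : IntegrableOn g s μ) (hneg : ∀ x ∈ s, g x < 0) : ∫ x in s, g x ∂μ < 0 := by
  have hsupp : (Function.support fun x => -g x) ∩ s = s :=
    inter_eq_right.2 fun x hx => neg_ne_zero.2 (hneg x hx).ne
  have hpos : 0 < ∫ x in s, -g x ∂μ :=
    (setIntegral_pos_iff_support_of_nonneg_ae
      ((ae_restrict_iff' hs).2 (.of_forall fun x hx => neg_nonneg.2 (hneg x hx).le)) hg.neg).2
      (by rwa [hsupp, pos_iff_ne_zero])
  simpa [integral_neg] using hpos

section

variable {E : Type*} [NormedAddCommGroup E] [NormedSpace ℝ E]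
  {f : ℝ × ℝ → E} {f' : ℝ × ℝ →L[ℝ] E} {s t : Set ℝ} {x y : ℝ}

theorem HasFDerivWithinAt.hasDerivWithinAt_partial_fst
    (hf : HasFDerivWithinAt f f' (s ×ˢ t) (x, y)) (hy : y ∈ t) :
    HasDerivWithinAt (fun x => f (x, y)) (f' (1, 0)) s x :=
  hf.comp_hasDerivWithinAt x ((hasDerivAt_id x).prodMk (hasDerivAt_const x y)).hasDerivWithinAt
    fun _ hx => mk_mem_prod hx hy

theorem HasFDerivWithinAt.hasDerivWithinAt_partial_snd
    (hf : HasFDerivWithinAt f f' (s ×ˢ t) (x, y)) (hx : x ∈ s) :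
    HasDerivWithinAt (fun y => f (x, y)) (f' (0, 1)) t y :=
  hf.comp_hasDerivWithinAt y ((hasDerivAt_const y x).prodMk (hasDerivAt_id y)).hasDerivWithinAt
    fun _ hy => mk_mem_prod hx hy

end

section

variable {E : Type*} [NormedAddCommGroup E] [NormedSpace ℝ E] [CompleteSpace E] {a b c d : ℝ}

theorem setIntegral_Icc_eq_sub_of_hasDerivWithinAt (hab : a ≤ b) {φ φ' : ℝ → E}
    (hφ : ∀ x ∈ Icc a b, HasDerivWithinAt φ (φ' x) (Icc a b) x)
    (hφ' : ContinuousOn φ' (Icc a b)) :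
    ∫ x in Icc a b, φ' x = φ b - φ a := by
  rw [integral_Icc_eq_integral_Ioc, ← intervalIntegral.integral_of_le hab]
  refine intervalIntegral.integral_eq_sub_of_hasDeriv_right_of_le hab
    (fun x hx => (hφ x hx).continuousWithinAt)
    (fun x hx => (hφ x (Ioo_subset_Icc_self hx)).mono_of_mem_nhdsWithin ?_)
    (hφ'.intervalIntegrable_of_Icc hab)
  exact Filter.mem_of_superset (Ioc_mem_nhdsGT hx.2)
    (Ioc_subset_Icc_self.trans (Icc_subset_Icc_left hx.1.le))

variable {f : ℝ × ℝ → E} {f' : ℝ × ℝ → ℝ × ℝ →L[ℝ] E}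

theorem setIntegral_Icc_prod_partial_fst (hab : a ≤ b) (hcd : c ≤ d)
    (hf : ∀ p ∈ Icc a b ×ˢ Icc c d, HasFDerivWithinAt f (f' p) (Icc a b ×ˢ Icc c d) p)
    (hf' : ContinuousOn (fun p => f' p (1, 0)) (Icc a b ×ˢ Icc c d)) :
    ∫ p in Icc a b ×ˢ Icc c d, f' p (1, 0) = ∫ t in c..d, (f (b, t) - f (a, t)) := by
  have hint : Integrable (fun p => f' p (1, 0))
      ((volume.restrict (Icc a b)).prod (volume.restrict (Icc c d))) := by
    rw [Measure.prod_restrict, ← Measure.volume_eq_prod]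
    exact hf'.integrableOn_compact (isCompact_Icc.prod isCompact_Icc)
  have hinner : ∀ t ∈ Icc c d, ∫ s in Icc a b, f' (s, t) (1, 0) = f (b, t) - f (a, t) :=
    fun t ht => setIntegral_Icc_eq_sub_of_hasDerivWithinAt hab
      (fun s hs => (hf (s, t) ⟨hs, ht⟩).hasDerivWithinAt_partial_fst ht)
      (hf'.comp (Continuous.continuousOn (by fun_prop)) fun s hs => mk_mem_prod hs ht)
  rw [Measure.volume_eq_prod, ← Measure.prod_restrict, integral_prod_symm _ hint,
    setIntegral_congr_fun measurableSet_Icc hinner, integral_Icc_eq_integral_Ioc,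
    intervalIntegral.integral_of_le hcd]

theorem setIntegral_Icc_prod_partial_snd (hab : a ≤ b) (hcd : c ≤ d)
    (hf : ∀ p ∈ Icc a b ×ˢ Icc c d, HasFDerivWithinAt f (f' p) (Icc a b ×ˢ Icc c d) p)
    (hf' : ContinuousOn (fun p => f' p (0, 1)) (Icc a b ×ˢ Icc c d)) :
    ∫ p in Icc a b ×ˢ Icc c d, f' p (0, 1) = ∫ s in a..b, (f (s, d) - f (s, c)) := by
  have hinner : ∀ s ∈ Icc a b, ∫ t in Icc c d, f' (s, t) (0, 1) = f (s, d) - f (s, c) :=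
    fun s hs => setIntegral_Icc_eq_sub_of_hasDerivWithinAt hcd
      (fun t ht => (hf (s, t) ⟨hs, ht⟩).hasDerivWithinAt_partial_snd hs)
      (hf'.comp (Continuous.continuousOn (by fun_prop)) fun t ht => mk_mem_prod hs ht)
  rw [Measure.volume_eq_prod,
    setIntegral_prod _ (hf'.integrableOn_compact (isCompact_Icc.prod isCompact_Icc)),
    setIntegral_congr_fun measurableSet_Icc hinner, integral_Icc_eq_integral_Ioc,
    intervalIntegral.integral_of_le hab]

end

theorem intervalIntegral_im_sub_eq_setIntegral_re {a b c d : ℝ} (hab : a < b) (hcd : c < d)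
    {u V : ℝ × ℝ → ℂ} (hu : ContDiffOn ℝ 1 u (Icc a b ×ˢ Icc c d))
    (hV : ContinuousOn V (Icc a b ×ˢ Icc c d))
    (hpde : ∀ p ∈ Icc a b ×ˢ Icc c d, fderivWithin ℝ u (Icc a b ×ˢ Icc c d) p (1, 0) =
      Complex.I * (V p - fderivWithin ℝ u (Icc a b ×ˢ Icc c d) p (0, 1)))
    (hbd : ∀ s ∈ Icc a b, (u (s, c)).re = (u (s, d)).re) :
    (∫ t in c..d, (u (b, t)).im) - ∫ t in c..d, (u (a, t)).im =
      ∫ p in Icc a b ×ˢ Icc c d, (V p).re := by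
  set R := Icc a b ×ˢ Icc c d
  set D := fderivWithin ℝ u R
  have hR : IsCompact R := isCompact_Icc.prod isCompact_Icc
  have hD : ∀ p ∈ R, HasFDerivWithinAt u (D p) R p := fun p hp =>
    (hu.differentiableOn one_ne_zero p hp).hasFDerivWithinAt
  have hDc : ContinuousOn D R :=
    hu.continuousOn_fderivWithin ((uniqueDiffOn_Icc hab).prod (uniqueDiffOn_Icc hcd)) le_rfl
  have hslice : ∀ s ∈ Icc a b, IntervalIntegrable (fun t => (u (s, t)).im) volume c d :=
    fun s hs => ContinuousOn.intervalIntegrable_of_Icc hcd.le <|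
      Complex.continuous_im.comp_continuousOn <|
        hu.continuousOn.comp (Continuous.continuousOn (by fun_prop)) fun t ht => ⟨hs, ht⟩
  have hIm_s : ∫ p in R, (D p (1, 0)).im = ∫ t in c..d, ((u (b, t)).im - (u (a, t)).im) :=
    setIntegral_Icc_prod_partial_fst hab.le hcd.le
      (fun p hp => Complex.imCLM.hasFDerivAt.comp_hasFDerivWithinAt p (hD p hp))
      (Complex.continuous_im.comp_continuousOn (hDc.clm_apply continuousOn_const))
  have hRe_t : ∫ p in R, (D p (0, 1)).re = 0 := by
    refine (setIntegral_Icc_prod_partial_snd hab.le hcd.le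
      (fun p hp => Complex.reCLM.hasFDerivAt.comp_hasFDerivWithinAt p (hD p hp))
      (Complex.continuous_re.comp_continuousOn (hDc.clm_apply continuousOn_const))).trans ?_
    refine (intervalIntegral.integral_congr fun s hs => ?_).trans intervalIntegral.integral_zero
    simp [hbd s (uIcc_of_le hab.le ▸ hs)]
  have hCR : ∀ p ∈ R, (D p (1, 0)).im = (V p).re - (D p (0, 1)).re := fun p hp => by
    rw [hpde p hp]; simp
  have hReV : IntegrableOn (fun p => (V p).re) R :=
    (Complex.continuous_re.comp_continuousOn hV).integrableOn_compact hR
  have hReD : IntegrableOn (fun p => (D p (0, 1)).re) R :=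
    (Complex.continuous_re.comp_continuousOn
      (hDc.clm_apply continuousOn_const)).integrableOn_compact hR
  rw [← intervalIntegral.integral_sub (hslice b ⟨hab.le, le_rfl⟩)
      (hslice a ⟨le_rfl, hab.le⟩), ← hIm_s,
    setIntegral_congr_fun (measurableSet_Icc.prod measurableSet_Icc) hCR,
    integral_sub hReV hReD, hRe_t, sub_zero]

theorem stmt_4_general (a b : ℝ) (hab : a < b) (u V : ℝ × ℝ → ℂ)
    (hu : ContDiffOn ℝ 1 u (Set.Icc a b ×ˢ Set.Icc (0:ℝ) 1))
    (hV : ContinuousOn V (Set.Icc a b ×ˢ Set.Icc (0:ℝ) 1))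
    (hpde : ∀ p ∈ Set.Icc a b ×ˢ Set.Icc (0:ℝ) 1,
      fderivWithin ℝ u (Set.Icc a b ×ˢ Set.Icc (0:ℝ) 1) p ((1:ℝ), (0:ℝ)) =
        Complex.I * (V p - fderivWithin ℝ u (Set.Icc a b ×ˢ Set.Icc (0:ℝ) 1) p ((0:ℝ), (1:ℝ))))
    (hbd : ∀ s ∈ Set.Icc a b, (u (s, 0)).re = (u (s, 1)).re)
    (hVre : ∀ p ∈ Set.Icc a b ×ˢ Set.Icc (0:ℝ) 1, (V p).re < 0) :
    ∫ t in (0:ℝ)..1, (u (b, t)).im < ∫ t in (0:ℝ)..1, (u (a, t)).im := by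
  have hvol : volume (Icc a b ×ˢ Icc (0:ℝ) 1) ≠ 0 := by
    simp only [Measure.volume_eq_prod, Measure.prod_prod, Real.volume_Icc]
    simp [hab]
  have hneg : ∫ p in Icc a b ×ˢ Icc (0:ℝ) 1, (V p).re < 0 :=
    setIntegral_neg_of_forall_neg (measurableSet_Icc.prod measurableSet_Icc) hvol
      ((Complex.continuous_re.comp_continuousOn hV).integrableOn_compact
        (isCompact_Icc.prod isCompact_Icc)) hVre
  linarith [intervalIntegral_im_sub_eq_setIntegral_re hab zero_lt_one hu hV hpde hbd]

/-- weak Morse approximation, `y`-direction. For a `C¹` solution `u` of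
the perturbed Cauchy–Riemann equation `∂ₛu = i·(V − ∂ₜu)` on `[a,b] × [0,1]` with
`Re u(s,0) = Re u(s,1)`, if `Im u > 1/10` and `Re V < 0` throughout, then
`∫₀¹ Im u(a,t) dt > ∫₀¹ Im u(b,t) dt`. -/
theorem stmt_4 (a b : ℝ) (hab : a < b) (u V : ℝ × ℝ → ℂ)
    (hu : ContDiffOn ℝ 1 u (Set.Icc a b ×ˢ Set.Icc (0:ℝ) 1))
    (hV : ContinuousOn V (Set.Icc a b ×ˢ Set.Icc (0:ℝ) 1))
    (hpde : ∀ p ∈ Set.Icc a b ×ˢ Set.Icc (0:ℝ) 1,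
      fderivWithin ℝ u (Set.Icc a b ×ˢ Set.Icc (0:ℝ) 1) p ((1:ℝ), (0:ℝ)) =
        Complex.I * (V p - fderivWithin ℝ u (Set.Icc a b ×ˢ Set.Icc (0:ℝ) 1) p ((0:ℝ), (1:ℝ))))
    (hbd : ∀ s ∈ Set.Icc a b, (u (s, 0)).re = (u (s, 1)).re)
    (him : ∀ p ∈ Set.Icc a b ×ˢ Set.Icc (0:ℝ) 1, (1:ℝ)/10 < (u p).im)
    (hVre : ∀ p ∈ Set.Icc a b ×ˢ Set.Icc (0:ℝ) 1, (V p).re < 0) :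
    ∫ t in (0:ℝ)..1, (u (b, t)).im < ∫ t in (0:ℝ)..1, (u (a, t)).im :=
  stmt_4_general a b hab u V hu hV hpde hbd hVre
end

section
/- Let a < b be real numbers, let u : ℝ × ℝ → ℂ be continuously differentiable on [a,b] × [0,1], and let V : ℝ × ℝ → ℂ be continuous, such that ∂u/∂s (s,t) = i · (V(s,t) − ∂u/∂t (s,t)) for all (s,t) ∈ [a,b] × [0,1]. Assume u(s,0) = u(s,1) for all s ∈ [a,b] (the cylinder case), and assume Re u(s,t) > 1/10 and Im V(s,t) < 0 for all (s,t) ∈ [a,b] × [0,1]. Then ∫₀¹ Re u(a,t) dt < ∫₀¹ Re u(b,t) dt. -/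
/-!
Integrate `∂ₛu = i (V - ∂ₜu)` over the rectangle `[a,b] × [0,1]`. By Fubini and the fundamental
theorem of calculus along horizontal slices, the left side integrates to
`∫₀¹ u(b,t) dt - ∫₀¹ u(a,t) dt`; along vertical slices `∂ₜu` integrates to `u(s,1) - u(s,0) = 0`.
Hence `∫₀¹ u(b,·) - ∫₀¹ u(a,·) = i ∬ V`, whose real part `-∬ Im V` is positive.
-/

open MeasureTheory Set

theorem setIntegral_pos_of_continuousOn {X : Type*} [TopologicalSpace X] [MeasurableSpace X]
    [OpensMeasurableSpace X] [T2Space X] {μ : Measure X} [IsFiniteMeasureOnCompacts μ]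
    {K : Set X} (hK : IsCompact K) (hμK : μ K ≠ 0) {f : X → ℝ}
    (hf : ContinuousOn f K) (hpos : ∀ x ∈ K, 0 < f x) : 0 < ∫ x in K, f x ∂μ := by
  rw [setIntegral_pos_iff_support_of_nonneg_ae
    (ae_restrict_of_forall_mem hK.measurableSet fun x hx => (hpos x hx).le)
    (hf.integrableOn_compact hK)]
  rwa [inter_eq_self_of_subset_right fun x hx => Function.mem_support.2 (hpos x hx).ne',
    pos_iff_ne_zero]

section

variable {E F : Type*} [NormedAddCommGroup E] [NormedSpace ℝ E] [CompleteSpace E]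
  [NormedAddCommGroup F] [NormedSpace ℝ F]

theorem integral_fderivWithin_eq_sub_of_hasDerivAt {f : F → E} {S : Set F}
    (hS : UniqueDiffOn ℝ S) (hf : ContDiffOn ℝ 1 f S) {γ : ℝ → F} {v : F}
    (hγ : ∀ x, HasDerivAt γ v x) {a b : ℝ} (hab : a ≤ b) (hγS : MapsTo γ (Icc a b) S) :
    ∫ x in a..b, fderivWithin ℝ f S (γ x) v = f (γ b) - f (γ a) := by
  have hγc : Continuous γ := continuous_iff_continuousAt.2 fun x => (hγ x).continuousAt
  refine intervalIntegral.integral_eq_sub_of_hasDerivAt_of_le hab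
    (hf.continuousOn.comp hγc.continuousOn hγS) (fun x hx => ?_) ?_
  · have hfx := (hf.differentiableOn one_ne_zero _ (hγS (Ioo_subset_Icc_self hx))).hasFDerivWithinAt
    exact (hfx.comp_hasDerivWithinAt x (hγ x).hasDerivWithinAt hγS).hasDerivAt
      (Icc_mem_nhds hx.1 hx.2)
  · refine ContinuousOn.intervalIntegrable ?_
    rw [uIcc_of_le hab]
    exact ((hf.continuousOn_fderivWithin hS le_rfl).comp hγc.continuousOn hγS).clm_apply
      continuousOn_const

end

section Rectangle

variable {E : Type*} [NormedAddCommGroup E] {a b c d : ℝ}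

theorem ContinuousOn.intervalIntegrable_slice_snd {f : ℝ × ℝ → E}
    (hf : ContinuousOn f (Icc a b ×ˢ Icc c d)) (hcd : c ≤ d) {x : ℝ} (hx : x ∈ Icc a b) :
    IntervalIntegrable (fun y => f (x, y)) volume c d :=
  (hf.comp (Continuous.continuousOn (by fun_prop)) fun y hy =>
    ⟨hx, by rwa [uIcc_of_le hcd] at hy⟩).intervalIntegrable

variable [NormedSpace ℝ E]

theorem setIntegral_Icc_prod_Icc {f : ℝ × ℝ → E} (hab : a ≤ b) (hcd : c ≤ d)
    (hf : IntegrableOn f (Icc a b ×ˢ Icc c d)) :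
    ∫ p in Icc a b ×ˢ Icc c d, f p = ∫ x in a..b, ∫ y in c..d, f (x, y) := by
  rw [Measure.volume_eq_prod] at hf ⊢
  rw [setIntegral_prod f hf, intervalIntegral.integral_of_le hab, ← integral_Icc_eq_integral_Ioc]
  refine setIntegral_congr_fun measurableSet_Icc fun x _ => ?_
  rw [intervalIntegral.integral_of_le hcd, ← integral_Icc_eq_integral_Ioc]

theorem setIntegral_Icc_prod_Icc_swap {f : ℝ × ℝ → E} (hab : a ≤ b) (hcd : c ≤ d)
    (hf : IntegrableOn f (Icc a b ×ˢ Icc c d)) :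
    ∫ p in Icc a b ×ˢ Icc c d, f p = ∫ y in c..d, ∫ x in a..b, f (x, y) := by
  rw [setIntegral_Icc_prod_Icc hab hcd hf, intervalIntegral_intervalIntegral_swap]
  exact hf.mono_set (prod_mono (by simp [uIoc_of_le hab, Ioc_subset_Icc_self])
    (by simp [uIoc_of_le hcd, Ioc_subset_Icc_self]))

theorem integrableOn_fderivWithin_apply {f : ℝ × ℝ → E} (hab : a < b) (hcd : c < d)
    (hf : ContDiffOn ℝ 1 f (Icc a b ×ˢ Icc c d)) (v : ℝ × ℝ) :
    IntegrableOn (fun p => fderivWithin ℝ f (Icc a b ×ˢ Icc c d) p v) (Icc a b ×ˢ Icc c d) :=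
  ((hf.continuousOn_fderivWithin ((uniqueDiffOn_Icc hab).prod (uniqueDiffOn_Icc hcd))
    le_rfl).clm_apply continuousOn_const).integrableOn_compact (isCompact_Icc.prod isCompact_Icc)

variable [CompleteSpace E]

theorem setIntegral_fderivWithin_fst {f : ℝ × ℝ → E} (hab : a < b) (hcd : c < d)
    (hf : ContDiffOn ℝ 1 f (Icc a b ×ˢ Icc c d)) :
    ∫ p in Icc a b ×ˢ Icc c d, fderivWithin ℝ f (Icc a b ×ˢ Icc c d) p (1, 0) =
      (∫ y in c..d, f (b, y)) - ∫ y in c..d, f (a, y) := by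
  rw [setIntegral_Icc_prod_Icc_swap hab.le hcd.le (integrableOn_fderivWithin_apply hab hcd hf _),
    ← intervalIntegral.integral_sub
      (hf.continuousOn.intervalIntegrable_slice_snd hcd.le (right_mem_Icc.2 hab.le))
      (hf.continuousOn.intervalIntegrable_slice_snd hcd.le (left_mem_Icc.2 hab.le))]
  refine intervalIntegral.integral_congr fun y hy => ?_
  rw [uIcc_of_le hcd.le] at hy
  exact integral_fderivWithin_eq_sub_of_hasDerivAt
    ((uniqueDiffOn_Icc hab).prod (uniqueDiffOn_Icc hcd)) hf
    (fun x => (hasDerivAt_id' x).prodMk (hasDerivAt_const x y)) hab.le fun x hx => ⟨hx, hy⟩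

theorem setIntegral_fderivWithin_snd_eq_zero {f : ℝ × ℝ → E} (hab : a < b) (hcd : c < d)
    (hf : ContDiffOn ℝ 1 f (Icc a b ×ˢ Icc c d)) (hper : ∀ x ∈ Icc a b, f (x, c) = f (x, d)) :
    ∫ p in Icc a b ×ˢ Icc c d, fderivWithin ℝ f (Icc a b ×ˢ Icc c d) p (0, 1) = 0 := by
  rw [setIntegral_Icc_prod_Icc hab.le hcd.le (integrableOn_fderivWithin_apply hab hcd hf _)]
  refine (intervalIntegral.integral_congr fun x hx => ?_).trans intervalIntegral.integral_zero
  rw [uIcc_of_le hab.le] at hx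
  refine (integral_fderivWithin_eq_sub_of_hasDerivAt
    ((uniqueDiffOn_Icc hab).prod (uniqueDiffOn_Icc hcd)) hf
    (fun y => (hasDerivAt_const y x).prodMk (hasDerivAt_id' y)) hcd.le
    fun y hy => ⟨hx, hy⟩).trans ?_
  rw [hper x hx, sub_self]

end Rectangle

theorem stmt_5_general (a b : ℝ) (hab : a < b) (u V : ℝ × ℝ → ℂ)
    (hu : ContDiffOn ℝ 1 u (Set.Icc a b ×ˢ Set.Icc (0:ℝ) 1))
    (hV : ContinuousOn V (Set.Icc a b ×ˢ Set.Icc (0:ℝ) 1))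
    (hpde : ∀ p ∈ Set.Icc a b ×ˢ Set.Icc (0:ℝ) 1,
      fderivWithin ℝ u (Set.Icc a b ×ˢ Set.Icc (0:ℝ) 1) p ((1:ℝ), (0:ℝ)) =
        Complex.I * (V p - fderivWithin ℝ u (Set.Icc a b ×ˢ Set.Icc (0:ℝ) 1) p ((0:ℝ), (1:ℝ))))
    (hper : ∀ s ∈ Set.Icc a b, u (s, 0) = u (s, 1))
    (hVim : ∀ p ∈ Set.Icc a b ×ˢ Set.Icc (0:ℝ) 1, (V p).im < 0) :
    ∫ t in (0:ℝ)..1, (u (a, t)).re < ∫ t in (0:ℝ)..1, (u (b, t)).re := by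
  set R := Icc a b ×ˢ Icc (0:ℝ) 1
  have hRc : IsCompact R := isCompact_Icc.prod isCompact_Icc
  have hVi : IntegrableOn V R := hV.integrableOn_compact hRc
  have hdiff : (∫ t in (0:ℝ)..1, u (b, t)) - ∫ t in (0:ℝ)..1, u (a, t) =
      Complex.I * ∫ p in R, V p := by
    rw [← setIntegral_fderivWithin_fst hab one_pos hu, setIntegral_congr_fun hRc.measurableSet hpde,
      integral_const_mul, integral_sub hVi (integrableOn_fderivWithin_apply hab one_pos hu _),
      setIntegral_fderivWithin_snd_eq_zero hab one_pos hu hper, sub_zero]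
  have hR0 : volume R ≠ 0 := by
    rw [Measure.volume_eq_prod, Measure.prod_prod, Real.volume_Icc, Real.volume_Icc]
    simp [hab]
  have hpos : 0 < ∫ p in R, -(V p).im :=
    setIntegral_pos_of_continuousOn hRc hR0 (Complex.continuous_im.comp_continuousOn hV).neg
      fun p hp => neg_pos.2 (hVim p hp)
  have hre : ∀ s ∈ Icc a b, ∫ t in (0:ℝ)..1, (u (s, t)).re = (∫ t in (0:ℝ)..1, u (s, t)).re :=
    fun s hs => Complex.reCLM.intervalIntegral_comp_comm
      (hu.continuousOn.intervalIntegrable_slice_snd zero_le_one hs)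
  have him : ∫ p in R, (V p).im = (∫ p in R, V p).im := Complex.imCLM.integral_comp_comm hVi
  rw [← sub_pos, hre b (right_mem_Icc.2 hab.le), hre a (left_mem_Icc.2 hab.le), ← Complex.sub_re,
    hdiff, Complex.I_mul_re, ← him, ← integral_neg]
  exact hpos

/-- weak Morse approximation, `x`-direction, cylinder case. For a `C¹`
solution `u` of the perturbed Cauchy–Riemann equation `∂ₛu = i·(V − ∂ₜu)` on
`[a,b] × [0,1]` with `u(s,0) = u(s,1)`, if `Re u > 1/10` and `Im V < 0` throughout, then
`∫₀¹ Re u(a,t) dt < ∫₀¹ Re u(b,t) dt`. -/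
theorem stmt_5 (a b : ℝ) (hab : a < b) (u V : ℝ × ℝ → ℂ)
    (hu : ContDiffOn ℝ 1 u (Set.Icc a b ×ˢ Set.Icc (0:ℝ) 1))
    (hV : ContinuousOn V (Set.Icc a b ×ˢ Set.Icc (0:ℝ) 1))
    (hpde : ∀ p ∈ Set.Icc a b ×ˢ Set.Icc (0:ℝ) 1,
      fderivWithin ℝ u (Set.Icc a b ×ˢ Set.Icc (0:ℝ) 1) p ((1:ℝ), (0:ℝ)) =
        Complex.I * (V p - fderivWithin ℝ u (Set.Icc a b ×ˢ Set.Icc (0:ℝ) 1) p ((0:ℝ), (1:ℝ))))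
    (hper : ∀ s ∈ Set.Icc a b, u (s, 0) = u (s, 1))
    (hre : ∀ p ∈ Set.Icc a b ×ˢ Set.Icc (0:ℝ) 1, (1:ℝ)/10 < (u p).re)
    (hVim : ∀ p ∈ Set.Icc a b ×ˢ Set.Icc (0:ℝ) 1, (V p).im < 0) :
    ∫ t in (0:ℝ)..1, (u (a, t)).re < ∫ t in (0:ℝ)..1, (u (b, t)).re :=
  stmt_5_general a b hab u V hu hV hpde hper hVim
end

section
/- Assume R v = v for every v ∈ A (1,0), and ρ(R v) < ρ(v) in the lexicographic order for every v ∉ A (1,0). Then: (1) for every v ∈ V the iterates Rⁿ v stabilize, and the pointwise limit R^∞ v lies in A (1,0); (2) R^∞ is a chain map (it commutes with d) which restricts to the identity on the subcomplex A (1,0); (3) R^∞ induces the identity map on the cohomology of V in every degree; and consequently (4) the inclusion of the subcomplex A (1,0) into V is a quasi-isomorphism. -/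
/-- For a cochain complex `(M, d)` of `K`-modules filtered by a
monotone, exhaustive, `d`-stable family of graded submodules `A` indexed by `ℕ ×ₗ ℕ`,
with bottom piece `A (1,0)`, and the basic retraction `R = 1 + d∘Δ + Δ∘d` (for a
degree `−1` map `Δ`) satisfying `R v = v` on `A (1,0)` and `ρ(R v) < ρ(v)` off `A (1,0)`:
(1) the iterates of `R` stabilize pointwise with limit `R^∞` landing in `A (1,0)`;
(2) `R^∞` is a chain map restricting to the identity on `A (1,0)`;
(3) `R^∞` induces the identity on cohomology in every degree;
(4) the inclusion of the subcomplex `A (1,0)` into `M` is a quasi-isomorphism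
(stated elementwise). -/
theorem stmt_11 {K : Type*} [CommRing K] (M : ℤ → Type*)
    [∀ k, AddCommGroup (M k)] [∀ k, Module K (M k)]
    (d : ∀ k : ℤ, M k →ₗ[K] M (k + 1))
    (hd : ∀ (k : ℤ) (x : M k), d (k + 1) (d k x) = 0)
    (A : ℕ ×ₗ ℕ → ∀ k : ℤ, Submodule K (M k))
    (hmono : ∀ p q : ℕ ×ₗ ℕ, p ≤ q → ∀ k : ℤ, A p k ≤ A q k)
    (hexh : ∀ (k : ℤ) (x : M k), ∃ p, x ∈ A p k)
    (hstab : ∀ (p : ℕ ×ₗ ℕ) (k : ℤ), ∀ x ∈ A p k, d k x ∈ A p (k + 1))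
    (ρ : ∀ k : ℤ, M k → ℕ ×ₗ ℕ)
    (hρ_mem : ∀ (k : ℤ) (x : M k), x ∈ A (ρ k x) k)
    (hρ_min : ∀ (k : ℤ) (x : M k) (p : ℕ ×ₗ ℕ), x ∈ A p k → ρ k x ≤ p)
    (Δ : ∀ k : ℤ, M (k + 1) →ₗ[K] M k)
    (R : ∀ k : ℤ, M (k + 1) →ₗ[K] M (k + 1))
    (hR : ∀ (k : ℤ) (x : M (k + 1)),
      R k x = x + d k (Δ k x) + Δ (k + 1) (d (k + 1) x))
    (hR_id : ∀ (k : ℤ), ∀ x ∈ A (toLex (1, 0)) (k + 1), R k x = x)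
    (hR_dec : ∀ (k : ℤ) (x : M (k + 1)), x ∉ A (toLex (1, 0)) (k + 1) →
      ρ (k + 1) (R k x) < ρ (k + 1) x) :
    -- (1) the iterates of R stabilize, landing in A (1,0)
    (∀ (k : ℤ) (x : M (k + 1)), ∃ n : ℕ, ((R k) ^ n) x ∈ A (toLex (1, 0)) (k + 1) ∧
      ∀ m : ℕ, n ≤ m → ((R k) ^ m) x = ((R k) ^ n) x) ∧
    ∃ Rinf : ∀ k : ℤ, M (k + 1) →ₗ[K] M (k + 1),
      -- Rinf is the pointwise limit of the iterates of R
      (∀ (k : ℤ) (x : M (k + 1)), ∃ n : ℕ, ∀ m : ℕ, n ≤ m → ((R k) ^ m) x = Rinf k x) ∧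
      (∀ (k : ℤ) (x : M (k + 1)), Rinf k x ∈ A (toLex (1, 0)) (k + 1)) ∧
      -- (2) Rinf is a chain map restricting to the identity on A (1,0)
      (∀ (k : ℤ) (x : M (k + 1)), d (k + 1) (Rinf k x) = Rinf (k + 1) (d (k + 1) x)) ∧
      (∀ (k : ℤ), ∀ x ∈ A (toLex (1, 0)) (k + 1), Rinf k x = x) ∧
      -- (3) Rinf induces the identity on cohomology in every degree
      (∀ (k : ℤ) (x : M (k + 1)), d (k + 1) x = 0 → ∃ y : M k, Rinf k x = x + d k y) ∧
      -- (4) the inclusion A (1,0) ↪ M is a quasi-isomorphism: injectivity ...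
      (∀ (k : ℤ), ∀ x ∈ A (toLex (1, 0)) (k + 1), d (k + 1) x = 0 →
        (∃ y : M k, d k y = x) → ∃ y ∈ A (toLex (1, 0)) k, d k y = x) ∧
      -- ... and surjectivity on cohomology
      (∀ (k : ℤ) (x : M (k + 1)), d (k + 1) x = 0 →
        ∃ x' ∈ A (toLex (1, 0)) (k + 1), d (k + 1) x' = 0 ∧
          ∃ y : M k, x = x' + d k y) := by

  classical
  -- elements of the bottom piece are fixed by all powers of R
  have hfix : ∀ (k : ℤ) (x : M (k + 1)), x ∈ A (toLex (1, 0)) (k + 1) →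
      ∀ m : ℕ, ((R k) ^ m) x = x := by
    intro k x hx m
    induction m with
    | zero => simp
    | succ m ih => rw [pow_succ, Module.End.mul_apply, hR_id k x hx, ih]
  -- (1) stabilization
  have stab : ∀ (k : ℤ) (x : M (k + 1)), ∃ n : ℕ,
      ((R k) ^ n) x ∈ A (toLex (1, 0)) (k + 1) ∧
      ∀ m : ℕ, n ≤ m → ((R k) ^ m) x = ((R k) ^ n) x := by
    intro k
    have key : ∀ p : ℕ ×ₗ ℕ, ∀ x : M (k + 1), ρ (k + 1) x = p → ∃ n : ℕ,
        ((R k) ^ n) x ∈ A (toLex (1, 0)) (k + 1) ∧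
        ∀ m : ℕ, n ≤ m → ((R k) ^ m) x = ((R k) ^ n) x := by
      intro p
      induction p using WellFoundedLT.induction with
      | _ p ih =>
        intro x hx
        by_cases hmem : x ∈ A (toLex (1, 0)) (k + 1)
        · refine ⟨0, by simpa using hmem, fun m _ => by simpa using hfix k x hmem m⟩
        · obtain ⟨n, h1, h2⟩ := ih (ρ (k + 1) (R k x)) (hx ▸ hR_dec k x hmem) (R k x) rfl
          refine ⟨n + 1, ?_, ?_⟩
          · rwa [pow_succ, Module.End.mul_apply]
          · intro m hm
            obtain ⟨m', rfl⟩ : ∃ m', m = m' + 1 := ⟨m - 1, by omega⟩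
            rw [pow_succ, pow_succ, Module.End.mul_apply, Module.End.mul_apply,
              h2 m' (by omega)]
    intro x; exact key _ x rfl
  refine ⟨stab, ?_⟩
  -- the stabilization index and limit value
  set N : ∀ (k : ℤ), M (k + 1) → ℕ := fun k x => (stab k x).choose with hN
  set f : ∀ (k : ℤ), M (k + 1) → M (k + 1) := fun k x => ((R k) ^ (N k x)) x with hf
  have hmemf : ∀ (k : ℤ) (x : M (k + 1)), f k x ∈ A (toLex (1, 0)) (k + 1) :=
    fun k x => (stab k x).choose_spec.1
  have heval : ∀ (k : ℤ) (x : M (k + 1)) (m : ℕ), N k x ≤ m → ((R k) ^ m) x = f k x :=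
    fun k x m hm => (stab k x).choose_spec.2 m hm
  -- linearity of the limit
  have hadd : ∀ (k : ℤ) (x y : M (k + 1)), f k (x + y) = f k x + f k y := by
    intro k x y
    set m := max (max (N k x) (N k y)) (N k (x + y)) with hm
    rw [← heval k x m (by omega), ← heval k y m (by omega),
      ← heval k (x + y) m (by omega), map_add]
  have hsmul : ∀ (k : ℤ) (c : K) (x : M (k + 1)), f k (c • x) = c • f k x := by
    intro k c x
    set m := max (N k x) (N k (c • x)) with hm
    rw [← heval k x m (by omega), ← heval k (c • x) m (by omega), map_smul]
  refine ⟨fun k => ⟨⟨f k, hadd k⟩, hsmul k⟩, ?_, ?_, ?_, ?_, ?_, ?_, ?_⟩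
  · exact fun k x => ⟨N k x, fun m hm => heval k x m hm⟩
  · exact hmemf
  · -- chain map
    have hcomm1 : ∀ (k : ℤ) (x : M (k + 1)),
        d (k + 1) (R k x) = R (k + 1) (d (k + 1) x) := by
      intro k x
      rw [hR k x, hR (k + 1) (d (k + 1) x), map_add, map_add,
        hd k (Δ k x), hd (k + 1) x, map_zero]
      abel
    have hcommn : ∀ (k : ℤ) (m : ℕ) (x : M (k + 1)),
        d (k + 1) (((R k) ^ m) x) = ((R (k + 1)) ^ m) (d (k + 1) x) := by
      intro k m
      induction m with
      | zero => intro x; simp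
      | succ m ih =>
        intro x
        rw [pow_succ, pow_succ, Module.End.mul_apply, Module.End.mul_apply,
          ih (R k x), hcomm1]
    intro k x
    set m := max (N k x) (N (k + 1) (d (k + 1) x)) with hm
    show d (k + 1) (f k x) = f (k + 1) (d (k + 1) x)
    rw [← heval k x m (by omega), ← heval (k + 1) (d (k + 1) x) m (by omega), hcommn]
  · intro k x hx
    show f k x = x
    rw [hf]
    exact hfix k x hx (N k x)
  · -- (3) identity on cohomology
    intro k x hdx
    have hcomm1 : ∀ (x : M (k + 1)),
        d (k + 1) (R k x) = R (k + 1) (d (k + 1) x) := by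
      intro x
      rw [hR k x, hR (k + 1) (d (k + 1) x), map_add, map_add,
        hd k (Δ k x), hd (k + 1) x, map_zero]
      abel
    have hcommn : ∀ (m : ℕ) (x : M (k + 1)),
        d (k + 1) (((R k) ^ m) x) = ((R (k + 1)) ^ m) (d (k + 1) x) := by
      intro m
      induction m with
      | zero => intro x; simp
      | succ m ih =>
        intro x
        rw [pow_succ, pow_succ, Module.End.mul_apply, Module.End.mul_apply,
          ih (R k x), hcomm1]
    have hbd : ∀ m : ℕ, ∃ y : M k, ((R k) ^ m) x = x + d k y := by
      intro m
      induction m with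
      | zero => exact ⟨0, by simp⟩
      | succ m ih =>
        obtain ⟨y, hy⟩ := ih
        refine ⟨y + Δ k (((R k) ^ m) x), ?_⟩
        rw [pow_succ', Module.End.mul_apply, hR k (((R k) ^ m) x), hcommn m x,
          hdx, map_zero, map_zero, hy, map_add]
        simp only [map_add]
        abel
    obtain ⟨y, hy⟩ := hbd (N k x)
    exact ⟨y, hy⟩
  · -- (4) injectivity on cohomology
    intro k x hx hdx ⟨y, hy⟩
    obtain ⟨j, rfl⟩ : ∃ j : ℤ, k = j + 1 := ⟨k - 1, by ring⟩
    refine ⟨f j y, hmemf j y, ?_⟩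
    have hcomm1 : ∀ (x : M (j + 1)),
        d (j + 1) (R j x) = R (j + 1) (d (j + 1) x) := by
      intro x
      rw [hR j x, hR (j + 1) (d (j + 1) x), map_add, map_add,
        hd j (Δ j x), hd (j + 1) x, map_zero]
      abel
    have hcommn : ∀ (m : ℕ) (x : M (j + 1)),
        d (j + 1) (((R j) ^ m) x) = ((R (j + 1)) ^ m) (d (j + 1) x) := by
      intro m
      induction m with
      | zero => intro x; simp
      | succ m ih =>
        intro x
        rw [pow_succ, pow_succ, Module.End.mul_apply, Module.End.mul_apply,
          ih (R j x), hcomm1]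
    rw [hf]
    show d (j + 1) (((R j) ^ (N j y)) y) = x
    rw [hcommn (N j y) y, hy]
    exact hfix (j + 1) x hx (N j y)
  · -- surjectivity on cohomology
    intro k x hdx
    refine ⟨f k x, hmemf k x, ?_, ?_⟩
    · have hcomm1 : ∀ (x : M (k + 1)),
          d (k + 1) (R k x) = R (k + 1) (d (k + 1) x) := by
        intro x
        rw [hR k x, hR (k + 1) (d (k + 1) x), map_add, map_add,
          hd k (Δ k x), hd (k + 1) x, map_zero]
        abel
      have hcommn : ∀ (m : ℕ) (x : M (k + 1)),
          d (k + 1) (((R k) ^ m) x) = ((R (k + 1)) ^ m) (d (k + 1) x) := by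
        intro m
        induction m with
        | zero => intro x; simp
        | succ m ih =>
          intro x
          rw [pow_succ, pow_succ, Module.End.mul_apply, Module.End.mul_apply,
            ih (R k x), hcomm1]
      rw [hf]
      show d (k + 1) (((R k) ^ (N k x)) x) = 0
      rw [hcommn, hdx, map_zero]
    · -- f k x = x + d k y, so x = f k x + d k (-y)
      have hcomm1 : ∀ (x : M (k + 1)),
          d (k + 1) (R k x) = R (k + 1) (d (k + 1) x) := by
        intro x
        rw [hR k x, hR (k + 1) (d (k + 1) x), map_add, map_add,
          hd k (Δ k x), hd (k + 1) x, map_zero]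
        abel
      have hcommn : ∀ (m : ℕ) (x : M (k + 1)),
          d (k + 1) (((R k) ^ m) x) = ((R (k + 1)) ^ m) (d (k + 1) x) := by
        intro m
        induction m with
        | zero => intro x; simp
        | succ m ih =>
          intro x
          rw [pow_succ, pow_succ, Module.End.mul_apply, Module.End.mul_apply,
            ih (R k x), hcomm1]
      have hbd : ∀ m : ℕ, ∃ y : M k, ((R k) ^ m) x = x + d k y := by
        intro m
        induction m with
        | zero => exact ⟨0, by simp⟩
        | succ m ih =>
          obtain ⟨y, hy⟩ := ih
          refine ⟨y + Δ k (((R k) ^ m) x), ?_⟩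
          rw [pow_succ', Module.End.mul_apply, hR k (((R k) ^ m) x), hcommn m x,
            hdx, map_zero, map_zero, hy, map_add]
          simp only [map_add]
          abel
      obtain ⟨y, hy⟩ := hbd (N k x)
      refine ⟨-y, ?_⟩
      rw [hf]
      show x = ((R k) ^ (N k x)) x + d k (-y)
      rw [hy, map_neg]
      abel
end
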